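/- Let R be a finite ring and w : R → ℂ a weight with left symmetry group equal to R^× (i.e. w(ux) = w(x) for all units u and all x). Then w is constant on sets of elements generating the same principal left ideal: Rx = Ry implies w(x) = w(y). -/

import Mathlib

/-!
If `R x = R y` then `y = a x` and `x = b y`, so `b a - 1` annihilates `x`; it therefore suffices
that a finite ring has stable range one: if `s r - 1` lies in a left ideal `L`, then some unit
is congruent to `r` modulo `L`. Units lift along `R → R/J` for the Jacobson radical `J`, and
`R/J` is semisimple, so we may assume `R` semisimple. Then `a ↦ [a]` and `a ↦ [a r]` are two
surjections `R → R/L`; their kernels have isomorphic complements, hence are isomorphic by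
cancellation of finite modules (Lovász: the numbers `|Hom(X, A)|` determine `A`, by counting
injections). The resulting automorphism of `R` is right multiplication by a unit `u`, and
`[u] = [r]`.
-/

open Function Submodule LinearMap

universe u

section Cancellation

variable {R : Type*} [Ring R]

instance LinearMap.finite_of_finite {X A : Type*} [AddCommGroup X] [Module R X] [AddCommGroup A]
    [Module R A] [Finite X] [Finite A] : Finite (X →ₗ[R] A) :=
  Finite.of_injective _ DFunLike.coe_injective

instance Submodule.Quotient.finite_of_finite {X : Type*} [AddCommGroup X] [Module R X] [Finite X]
    (N : Submodule R X) : Finite (X ⧸ N) :=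
  Finite.of_surjective _ N.mkQ_surjective

theorem bijective_comp_mkQ_of_injective (X A : Type*) [AddCommGroup X] [Module R X]
    [AddCommGroup A] [Module R A] :
    Bijective fun p : Σ N : Submodule R X, {g : X ⧸ N →ₗ[R] A // Injective g} =>
      p.2.1 ∘ₗ p.1.mkQ := by
  refine ⟨?_, fun f => ⟨⟨ker f, (ker f).liftQ f le_rfl, ?_⟩, (ker f).liftQ_mkQ f le_rfl⟩⟩
  · rintro ⟨N, g, hg⟩ ⟨N', g', hg'⟩ h
    obtain rfl : N = N' := by
      simpa [ker_comp, ker_eq_bot.2 hg, ker_eq_bot.2 hg'] using congrArg ker h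
    obtain rfl : g = g' := linearMap_qext _ h
    rfl
  · rw [← ker_eq_bot]
    exact ker_liftQ_eq_bot' _ _ rfl

theorem card_linearMap_eq_sum_card_injective (X A : Type*) [AddCommGroup X] [Module R X]
    [AddCommGroup A] [Module R A] [Finite X] [Finite A] [Fintype (Submodule R X)] :
    Nat.card (X →ₗ[R] A) = ∑ N : Submodule R X, Nat.card {g : X ⧸ N →ₗ[R] A // Injective g} := by
  rw [← Nat.card_sigma]
  exact (Nat.card_congr (Equiv.ofBijective _ (bijective_comp_mkQ_of_injective X A))).symm

theorem card_injective_linearMap_congr {X Y : Type*} (A : Type*) [AddCommGroup X] [Module R X]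
    [AddCommGroup Y] [Module R Y] [AddCommGroup A] [Module R A] (e : X ≃ₗ[R] Y) :
    Nat.card {g : X →ₗ[R] A // Injective g} = Nat.card {g : Y →ₗ[R] A // Injective g} :=
  Nat.card_congr <| (e.arrowCongrAddEquiv (LinearEquiv.refl R A)).toEquiv.subtypeEquiv
    fun f => (EquivLike.injective_comp e.symm f).symm

theorem card_quotient_lt {X : Type*} [AddCommGroup X] [Module R X] [Finite X]
    {N : Submodule R X} (hN : N ≠ ⊥) : Nat.card (X ⧸ N) < Nat.card X := by
  refine (Nat.card_le_card_of_surjective _ N.mkQ_surjective).lt_of_ne fun h => hN ?_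
  rw [← ker_mkQ N, ker_eq_bot]
  exact (N.mkQ_surjective.bijective_of_nat_card_le h.ge).1

theorem card_injective_linearMap_eq {A B : Type u} [AddCommGroup A] [Module R A]
    [AddCommGroup B] [Module R B] [Finite A] [Finite B]
    (h : ∀ (X : Type u) [AddCommGroup X] [Module R X] [Finite X],
      Nat.card (X →ₗ[R] A) = Nat.card (X →ₗ[R] B))
    (X : Type u) [AddCommGroup X] [Module R X] [Finite X] :
    Nat.card {g : X →ₗ[R] A // Injective g} = Nat.card {g : X →ₗ[R] B // Injective g} := by
  induction hn : Nat.card X using Nat.strong_induction_on generalizing X with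
  | _ n ih =>
    classical
    have := Fintype.ofFinite (Submodule R X)
    have hquot (N : Submodule R X) (hN : N ∈ Finset.univ.erase ⊥) :
        Nat.card {g : X ⧸ N →ₗ[R] A // Injective g}
          = Nat.card {g : X ⧸ N →ₗ[R] B // Injective g} :=
      ih _ (hn ▸ card_quotient_lt (Finset.ne_of_mem_erase hN)) (X ⧸ N) rfl
    -- grouping the maps `X → A` by their kernel `N`, the terms with `N ≠ ⊥` agree by induction
    have hsum := h X
    rw [card_linearMap_eq_sum_card_injective, card_linearMap_eq_sum_card_injective,
      ← Finset.add_sum_erase _ _ (Finset.mem_univ ⊥),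
      ← Finset.add_sum_erase _ _ (Finset.mem_univ ⊥), Finset.sum_congr rfl hquot,
      add_left_inj] at hsum
    have e := quotEquivOfEqBot (⊥ : Submodule R X) rfl
    rwa [card_injective_linearMap_congr A e, card_injective_linearMap_congr B e] at hsum

theorem nonempty_linearEquiv_of_card_linearMap_eq {A B : Type u} [AddCommGroup A] [Module R A]
    [AddCommGroup B] [Module R B] [Finite A] [Finite B]
    (h : ∀ (X : Type u) [AddCommGroup X] [Module R X] [Finite X],
      Nat.card (X →ₗ[R] A) = Nat.card (X →ₗ[R] B)) :
    Nonempty (A ≃ₗ[R] B) := by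
  have hpos (C : Type u) [AddCommGroup C] [Module R C] [Finite C] :
      0 < Nat.card {g : C →ₗ[R] C // Injective g} :=
    Nat.card_pos_iff.2 ⟨⟨⟨LinearMap.id, injective_id⟩⟩, inferInstance⟩
  obtain ⟨⟨f, hf⟩, -⟩ := Nat.card_pos_iff.1 <| card_injective_linearMap_eq h A ▸ hpos A
  obtain ⟨⟨g, hg⟩, -⟩ := Nat.card_pos_iff.1 <|
    card_injective_linearMap_eq (fun X _ _ _ => (h X).symm) B ▸ hpos B
  exact ⟨.ofBijective f (hf.bijective_of_nat_card_le (Nat.card_le_card_of_injective g hg))⟩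

theorem nonempty_linearEquiv_of_prod_linearEquiv {A B M : Type u} [AddCommGroup A] [Module R A]
    [AddCommGroup B] [Module R B] [AddCommGroup M] [Module R M] [Finite A] [Finite B] [Finite M]
    (e : (A × M) ≃ₗ[R] (B × M)) : Nonempty (A ≃ₗ[R] B) := by
  refine nonempty_linearEquiv_of_card_linearMap_eq fun X _ _ _ => ?_
  have hprod (C : Type u) [AddCommGroup C] [Module R C] :
      Nat.card (X →ₗ[R] C × M) = Nat.card (X →ₗ[R] C) * Nat.card (X →ₗ[R] M) := by
    rw [← Nat.card_prod]
    exact Nat.card_congr (LinearMap.prodEquiv ℕ).toEquiv.symm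
  refine Nat.eq_of_mul_eq_mul_right (Nat.card_pos (α := X →ₗ[R] M)) ?_
  rw [← hprod, ← hprod]
  exact Nat.card_congr ((LinearEquiv.refl R X).arrowCongrAddEquiv e).toEquiv

end Cancellation

section StableRange

variable {R : Type*} [Ring R]

theorem exists_linearEquiv_comp_eq_of_surjective {P N : Type*} [AddCommGroup P] [Module R P]
    [AddCommGroup N] [Module R N] [IsSemisimpleModule R P] [Finite P] {f g : P →ₗ[R] N}
    (hf : Surjective f) (hg : Surjective g) : ∃ φ : P ≃ₗ[R] P, g ∘ₗ φ.toLinearMap = f := by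
  obtain ⟨C, hC⟩ := exists_isCompl (ker f)
  obtain ⟨C', hC'⟩ := exists_isCompl (ker g)
  let eC : C ≃ₗ[R] N := (quotientEquivOfIsCompl _ C hC).symm ≪≫ₗ f.quotKerEquivOfSurjective hf
  let eC' : C' ≃ₗ[R] N := (quotientEquivOfIsCompl _ C' hC').symm ≪≫ₗ g.quotKerEquivOfSurjective hg
  obtain ⟨θ⟩ := nonempty_linearEquiv_of_prod_linearEquiv <|
    prodEquivOfIsCompl _ C hC ≪≫ₗ (prodEquivOfIsCompl _ C' hC').symm ≪≫ₗ
      (LinearEquiv.refl R _).prodCongr (eC' ≪≫ₗ eC.symm)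
  refine ⟨(prodEquivOfIsCompl _ C hC).symm ≪≫ₗ θ.prodCongr (eC ≪≫ₗ eC'.symm) ≪≫ₗ
    prodEquivOfIsCompl _ C' hC', LinearMap.ext fun p => ?_⟩
  obtain ⟨⟨k, c⟩, rfl⟩ := (prodEquivOfIsCompl _ C hC).surjective p
  have hgC' (c' : C') : g c' = eC' c' := by simp [eC']
  have hfC (c : C) : f c = eC c := by simp [eC]
  simp [hgC', hfC]

theorem LinearEquiv.isUnit_apply_one (φ : R ≃ₗ[R] R) : IsUnit (φ 1) := by
  have hφ (a : R) : φ a = a * φ 1 := by rw [← smul_eq_mul, ← map_smul, smul_eq_mul, mul_one]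
  have hφ' (a : R) : φ.symm a = a * φ.symm 1 := by
    rw [← smul_eq_mul, ← map_smul, smul_eq_mul, mul_one]
  refine ⟨⟨φ 1, φ.symm 1, ?_, ?_⟩, rfl⟩
  · rw [← hφ', φ.symm_apply_apply]
  · rw [← hφ, φ.apply_symm_apply]

theorem IsSemisimpleRing.exists_unit_sub_mem_of_mul_sub_one_mem [IsSemisimpleRing R] [Finite R]
    (L : Submodule R R) {r s : R} (h : s * r - 1 ∈ L) : ∃ u : Rˣ, (u : R) - r ∈ L := by
  have hsurj : Surjective (L.mkQ ∘ₗ toSpanSingleton R R r) := by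
    intro q
    obtain ⟨b, rfl⟩ := L.mkQ_surjective q
    refine ⟨b * s, (Submodule.Quotient.eq L).2 ?_⟩
    simpa [mul_assoc, mul_sub] using L.smul_mem b h
  obtain ⟨φ, hφ⟩ := exists_linearEquiv_comp_eq_of_surjective hsurj L.mkQ_surjective
  refine ⟨φ.isUnit_apply_one.unit, (Submodule.Quotient.eq L).1 ?_⟩
  simpa using LinearMap.congr_fun hφ 1

theorem isUnit_of_isUnit_mk_jacobson [IsDedekindFiniteMonoid R] {a : R}
    (h : IsUnit (Ideal.Quotient.mk (Ring.jacobson R) a)) : IsUnit a := by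
  obtain ⟨b', hb'⟩ := h.exists_left_inv
  obtain ⟨b, rfl⟩ := Ideal.Quotient.mk_surjective b'
  have hba : b * a - 1 ∈ Ideal.jacobson ⊥ := by
    rw [Ideal.jacobson_bot, ← Ideal.Quotient.eq]
    simpa using hb'
  obtain ⟨s, hs⟩ := Ideal.exists_mul_sub_mem_of_sub_one_mem_jacobson _ hba
  rw [Ideal.mem_bot, sub_eq_zero, ← mul_assoc] at hs
  exact .of_mul_eq_one_right _ hs

theorem exists_unit_sub_mem_of_mul_sub_one_mem [Finite R] (L : Submodule R R) {r s : R}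
    (h : s * r - 1 ∈ L) : ∃ u : Rˣ, (u : R) - r ∈ L := by
  let π := Ideal.Quotient.mk (Ring.jacobson R)
  have : Finite (R ⧸ Ring.jacobson R) := Finite.of_surjective π Ideal.Quotient.mk_surjective
  obtain ⟨u, ℓ, hℓ, hπℓ⟩ :=
    IsSemisimpleRing.exists_unit_sub_mem_of_mul_sub_one_mem (L.map π.toSemilinearMap)
      (r := π r) (s := π s) ⟨_, h, by simp [π]⟩
  have hunit : IsUnit (r + ℓ) := isUnit_of_isUnit_mk_jacobson <| by
    rw [map_add, show π ℓ = _ from hπℓ, add_sub_cancel]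
    exact u.isUnit
  exact ⟨hunit.unit, by simpa using hℓ⟩

theorem exists_unit_mul_eq_of_span_singleton_eq [Finite R] {x y : R}
    (h : Ideal.span {x} = Ideal.span {y}) : ∃ u : Rˣ, (u : R) * x = y := by
  obtain ⟨a, rfl⟩ := Ideal.mem_span_singleton'.1 (h ▸ Ideal.mem_span_singleton_self y)
  obtain ⟨b, hb⟩ := Ideal.mem_span_singleton'.1 (h ▸ Ideal.mem_span_singleton_self x)
  have hba : b * a - 1 ∈ ker (toSpanSingleton R R x) := by
    simp [sub_mul, mul_assoc, hb]
  obtain ⟨u, hu⟩ := exists_unit_sub_mem_of_mul_sub_one_mem _ hba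
  exact ⟨u, by simpa [sub_mul, sub_eq_zero] using hu⟩

end StableRange

theorem left_invariant_weight_constant_on_associates_general {R : Type*} [Ring R] [Fintype R]
    (w : R → ℂ)
    (hsym : ∀ u : Rˣ, ∀ x : R, w ((u : R) * x) = w x)
    (x y : R) (h : Ideal.span ({x} : Set R) = Ideal.span ({y} : Set R)) :
    w x = w y := by
  obtain ⟨u, rfl⟩ := exists_unit_mul_eq_of_span_singleton_eq h
  exact (hsym u x).symm

/-- A weight on a finite ring whose left symmetry group is all of `R^×` is
constant on generating sets of principal left ideals. -/
theorem left_invariant_weight_constant_on_associates {R : Type*} [Ring R] [Fintype R]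
    (w : R → ℂ) (hw0 : w 0 = 0)
    (hsym : ∀ u : Rˣ, ∀ x : R, w ((u : R) * x) = w x)
    (x y : R) (h : Ideal.span ({x} : Set R) = Ideal.span ({y} : Set R)) :
    w x = w y :=
  left_invariant_weight_constant_on_associates_general w hsym x y h
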